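/- Let f : X → ℝ be a set function (on subsets of a finite set X) that takes only the values a and 0, where a > 0, of the form f(S) = a · Π_{j ∈ I} 1[j ∉ S] for a fixed subset I ⊆ X. Then any nonnegative linear combination of such functions (with possibly different constants a and subsets I) is non-increasing and supermodular, and consequently g(S) = F(∅) − F(S), where F is such a combination composed with a convex non-decreasing real function, is non-decreasing and submodular. -/

import Mathlib

/-! An avoidance indicator `S ↦ 1[Disjoint I S]` is antitone, and supermodular because `I` is
disjoint from `A ∪ B` iff it is disjoint from both `A` and `B`; both properties survive
nonnegative combinations. For an antitone supermodular `F` the four values satisfy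
`F (A ∪ B) ≤ F A, F B ≤ F (A ∩ B)` and `F A + F B ≤ F (A ∪ B) + F (A ∩ B)`, and a convex
non-decreasing `f` can only increase `f x + f y` when `x, y` are pushed apart to the endpoints
of such an interval, so `f ∘ F` is supermodular too and the gain `f (F ∅) - f (F S)` is
submodular. -/

variable {X : Type*} [Fintype X] [DecidableEq X]

/-- A nonnegative combination of "avoidance indicator" set functions
`S ↦ Σ_m a_m · Π_{j ∈ I_m} 1[j ∉ S]`. -/
def avoidComb {ι : Type*} (M : Finset ι) (a : ι → ℝ) (I : ι → Finset X)
    (S : Finset X) : ℝ :=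
  ∑ m ∈ M, a m * ∏ j ∈ I m, (if j ∈ S then (0:ℝ) else 1)

section Convex

variable {𝕜 : Type*} [Field 𝕜] [LinearOrder 𝕜] [IsStrictOrderedRing 𝕜] {f : 𝕜 → 𝕜}

theorem ConvexOn.map_add_map_reflect_le (hf : ConvexOn 𝕜 Set.univ f) {w x z : 𝕜}
    (hwx : w ≤ x) (hxz : x ≤ z) : f x + f (w + z - x) ≤ f w + f z := by
  rcases (hwx.trans hxz).eq_or_lt with rfl | hwz
  · obtain rfl : x = w := le_antisymm hxz hwx
    simp
  have hzw : z - w ≠ 0 := (sub_pos.2 hwz).ne'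
  set t := (z - x) / (z - w)
  set s := (x - w) / (z - w)
  have ht : 0 ≤ t := div_nonneg (sub_nonneg.2 hxz) (sub_pos.2 hwz).le
  have hs : 0 ≤ s := div_nonneg (sub_nonneg.2 hwx) (sub_pos.2 hwz).le
  have hts : t + s = 1 := by rw [← add_div, div_eq_one_iff_eq hzw]; ring
  have hx : t • w + s • z = x := by simp only [t, s, smul_eq_mul]; field_simp; ring
  have hx' : s • w + t • z = w + z - x := by simp only [t, s, smul_eq_mul]; field_simp; ring
  have h₁ := hf.2 (Set.mem_univ w) (Set.mem_univ z) ht hs hts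
  have h₂ := hf.2 (Set.mem_univ w) (Set.mem_univ z) hs ht (by rw [add_comm, hts])
  rw [hx] at h₁
  rw [hx'] at h₂
  simp only [smul_eq_mul] at h₁ h₂
  linear_combination h₁ + h₂ + (f w + f z) * hts

theorem ConvexOn.map_add_map_le_of_add_le (hf : ConvexOn 𝕜 Set.univ f) (hf' : Monotone f)
    {w x y z : 𝕜} (hwx : w ≤ x) (hxz : x ≤ z) (hxy : x + y ≤ w + z) :
    f x + f y ≤ f w + f z :=
  calc f x + f y ≤ f x + f (w + z - x) := by gcongr; exact hf' (by linarith)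
    _ ≤ f w + f z := hf.map_add_map_reflect_le hwx hxz

end Convex

theorem antitone_sum_mul {α ι : Type*} [Preorder α] {M : Finset ι} {c : ι → ℝ} {F : ι → α → ℝ}
    (hc : ∀ m ∈ M, 0 ≤ c m) (hF : ∀ m ∈ M, Antitone (F m)) :
    Antitone fun A ↦ ∑ m ∈ M, c m * F m A := fun _ _ hAB ↦
  Finset.sum_le_sum fun m hm ↦ mul_le_mul_of_nonneg_left (hF m hm hAB) (hc m hm)

def IsSupermodular {α : Type*} [Lattice α] (F : α → ℝ) : Prop :=
  ∀ A B, F A + F B ≤ F (A ⊔ B) + F (A ⊓ B)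

namespace IsSupermodular

variable {α : Type*} [Lattice α]

theorem sum_mul {ι : Type*} {M : Finset ι} {c : ι → ℝ} {F : ι → α → ℝ}
    (hc : ∀ m ∈ M, 0 ≤ c m) (hF : ∀ m ∈ M, IsSupermodular (F m)) :
    IsSupermodular fun A ↦ ∑ m ∈ M, c m * F m A := by
  intro A B
  simp only [← Finset.sum_add_distrib, ← mul_add]
  exact Finset.sum_le_sum fun m hm ↦ mul_le_mul_of_nonneg_left (hF m hm A B) (hc m hm)

theorem comp_convexOn {F : α → ℝ} (hF : IsSupermodular F) (hF' : Antitone F) {f : ℝ → ℝ}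
    (hf : ConvexOn ℝ Set.univ f) (hf' : Monotone f) : IsSupermodular (f ∘ F) := fun A B ↦
  hf.map_add_map_le_of_add_le hf' (hF' le_sup_left) (hF' inf_le_left) (hF A B)

end IsSupermodular

section AvoidanceIndicator

variable {α : Type*} [DistribLattice α] [OrderBot α] [DecidableRel (Disjoint : α → α → Prop)]

theorem antitone_ite_disjoint (I : α) :
    Antitone fun S : α ↦ if Disjoint I S then (1 : ℝ) else 0 := by
  intro A B hAB
  have hA : Disjoint I B → Disjoint I A := fun h ↦ h.mono_right hAB
  dsimp only
  split_ifs <;> simp_all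

theorem isSupermodular_ite_disjoint (I : α) :
    IsSupermodular fun S : α ↦ if Disjoint I S then (1 : ℝ) else 0 := by
  intro A B
  have hA : Disjoint I A → Disjoint I (A ⊓ B) := fun h ↦ h.mono_right inf_le_left
  have hB : Disjoint I B → Disjoint I (A ⊓ B) := fun h ↦ h.mono_right inf_le_right
  simp only [disjoint_sup_right]
  split_ifs <;> simp_all

end AvoidanceIndicator

theorem Finset.prod_ite_mem_zero_one {α M₀ : Type*} [DecidableEq α] [CommMonoidWithZero M₀]
    (I S : Finset α) : (∏ j ∈ I, if j ∈ S then (0 : M₀) else 1) = if Disjoint I S then 1 else 0 := by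
  simp only [Finset.disjoint_left, ← Finset.prod_boole, ite_not]

theorem avoidComb_eq_sum_ite_disjoint {α ι : Type*} [DecidableEq α] (M : Finset ι) (a : ι → ℝ)
    (I : ι → Finset α) :
    avoidComb M a I = fun S ↦ ∑ m ∈ M, a m * if Disjoint (I m) S then 1 else 0 := by
  ext S
  simp only [avoidComb, Finset.prod_ite_mem_zero_one]

/-- A nonnegative linear combination of avoidance-indicator set functions is
non-increasing and supermodular; consequently, for a convex non-decreasing `f`, the gain
`g(S) = f(F(∅)) − f(F(S))` (with `F = f ∘` the combination) is non-decreasing and submodular. -/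
theorem avoidComb_antitone_supermodular_gain
    {ι : Type*} (M : Finset ι) (a : ι → ℝ) (ha : ∀ m ∈ M, 0 ≤ a m)
    (I : ι → Finset X) (f : ℝ → ℝ)
    (hf_conv : ConvexOn ℝ Set.univ f) (hf_mono : Monotone f) :
    -- the combination is non-increasing
    (∀ A B : Finset X, A ⊆ B → avoidComb M a I B ≤ avoidComb M a I A) ∧
    -- the combination is supermodular
    (∀ A B : Finset X,
      avoidComb M a I A + avoidComb M a I B ≤
        avoidComb M a I (A ∪ B) + avoidComb M a I (A ∩ B)) ∧
    -- the gain is non-decreasing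
    (∀ A B : Finset X, A ⊆ B →
      f (avoidComb M a I ∅) - f (avoidComb M a I A) ≤
        f (avoidComb M a I ∅) - f (avoidComb M a I B)) ∧
    -- the gain is submodular
    (∀ A B : Finset X,
      (f (avoidComb M a I ∅) - f (avoidComb M a I (A ∪ B))) +
        (f (avoidComb M a I ∅) - f (avoidComb M a I (A ∩ B))) ≤
      (f (avoidComb M a I ∅) - f (avoidComb M a I A)) +
        (f (avoidComb M a I ∅) - f (avoidComb M a I B))) := by
  have hanti : Antitone (avoidComb M a I) := by
    rw [avoidComb_eq_sum_ite_disjoint]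
    exact antitone_sum_mul ha fun m _ ↦ antitone_ite_disjoint (I m)
  have hsuper : IsSupermodular (avoidComb M a I) := by
    rw [avoidComb_eq_sum_ite_disjoint]
    exact IsSupermodular.sum_mul ha fun m _ ↦ isSupermodular_ite_disjoint (I m)
  have hgain := hsuper.comp_convexOn hanti hf_conv hf_mono
  refine ⟨fun _ _ h ↦ hanti h, hsuper, fun A B hAB ↦ ?_, fun A B ↦ ?_⟩
  · exact sub_le_sub_left (hf_mono (hanti hAB)) _
  · have h := hgain A B
    simp only [Function.comp_apply, Finset.sup_eq_union, Finset.inf_eq_inter] at h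
    linarith
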